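/- arXiv:1204.4310 — 2 statements merged into one kernel-verified Lean document; each statement's English description precedes it below -/
import Mathlib

section
/- The homomorphism F_g → F_g sending each free generator a_i to its square a_i² is injective; moreover, any automorphism of F_g that preserves the subgroup generated by the squares a_1²,…,a_g² and acts faithfully on that subgroup acts faithfully on F_g. -/
/-!
Doubling every letter of a reduced word yields a reduced word, since a letter never cancels
against itself. Hence on normal forms the square map `aᵢ ↦ aᵢ²` is letter doubling, which is
injective. For the second claim, an element acting trivially on `F_g` in particular acts
trivially on the subgroup generated by the squares.
-/

namespace List

variable {α : Type*}

theorem flatMap_pair_self_injective :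
    Function.Injective fun l : List α => l.flatMap fun x => [x, x] := by
  intro l₁ l₂ h
  induction l₁ generalizing l₂ with
  | nil => cases l₂ <;> simp_all
  | cons x l₁ ih =>
    cases l₂ with
    | nil => simp at h
    | cons y l₂ =>
      simp only [flatMap_cons, cons_append, nil_append, cons.injEq] at h
      rw [h.1, ih h.2.2]

theorem IsChain.flatMap_pair_self {R : α → α → Prop} (hR : ∀ a, R a a) :
    ∀ {l : List α}, IsChain R l → IsChain R (l.flatMap fun x => [x, x])
  | [], _ => isChain_nil
  | [a], _ => isChain_pair.mpr (hR a)
  | a :: b :: l, h => by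
    rw [isChain_cons_cons] at h
    have hdouble := h.2.flatMap_pair_self hR
    simp only [flatMap_cons, cons_append, nil_append] at hdouble ⊢
    exact isChain_cons_cons.mpr ⟨hR a, isChain_cons_cons.mpr ⟨h.1, hdouble⟩⟩

end List

namespace FreeGroup

variable {α : Type*}

theorem IsReduced.flatMap_pair_self {L : List (α × Bool)} (h : IsReduced L) :
    IsReduced (L.flatMap fun x => [x, x]) :=
  List.IsChain.flatMap_pair_self (fun _ _ => rfl) h

theorem lift_of_mul_self_mk (L : List (α × Bool)) :
    lift (fun i => of i * of i) (mk L) = mk (L.flatMap fun x => [x, x]) := by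
  induction L with
  | nil => rfl
  | cons x L ih =>
    obtain ⟨i, _ | _⟩ := x
    all_goals
      rw [← List.singleton_append, ← mul_mk, _root_.map_mul, ih, List.flatMap_append, ← mul_mk]
      simp [lift_mk, of, inv_mk, mul_mk, invRev]

theorem toWord_lift_of_mul_self [DecidableEq α] (x : FreeGroup α) :
    (lift (fun i => of i * of i) x).toWord = x.toWord.flatMap fun a => [a, a] := by
  rw [← mk_toWord (x := x), lift_of_mul_self_mk, toWord_mk, toWord_mk,
    isReduced_toWord.flatMap_pair_self.reduce_eq, reduce_toWord]

theorem lift_of_mul_self_injective :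
    Function.Injective (lift fun i : α => of i * of i) := by
  classical
  intro x y h
  apply toWord_injective
  apply List.flatMap_pair_self_injective
  simpa only [toWord_lift_of_mul_self] using congrArg toWord h

end FreeGroup

/-- (1) The endomorphism of the free group `F_g` sending each free generator
`a_i` to its square `a_i²` is injective; moreover (2) any group acting by
automorphisms of `F_g`, preserving the subgroup generated by the squares
`a_1², …, a_g²` and acting faithfully on that subgroup, acts faithfully
on `F_g`. -/
theorem square_map_injective_and_faithful (g : ℕ) :
    Function.Injective
      (FreeGroup.lift (fun i : Fin g => FreeGroup.of i * FreeGroup.of i) :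
        FreeGroup (Fin g) →* FreeGroup (Fin g)) ∧
    ∀ (H : Type) [Group H] (α : H →* MulAut (FreeGroup (Fin g))),
      (∀ (h : H) (x : FreeGroup (Fin g)),
        x ∈ Subgroup.closure (Set.range fun i : Fin g => FreeGroup.of i * FreeGroup.of i) →
        α h x ∈ Subgroup.closure
          (Set.range fun i : Fin g => FreeGroup.of i * FreeGroup.of i)) →
      (∀ h : H,
        (∀ x ∈ Subgroup.closure
            (Set.range fun i : Fin g => FreeGroup.of i * FreeGroup.of i),
          α h x = x) → h = 1) →
      Function.Injective α := by
  refine ⟨FreeGroup.lift_of_mul_self_injective, fun H _ α _ hfaithful => ?_⟩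
  refine (injective_iff_map_eq_one α).mpr fun h hh => hfaithful h fun x _ => ?_
  rw [hh, MulAut.one_apply]
end

section
/- In the free group F_{2g} = ⟨a_1, b_1, …, a_g, b_g⟩, the elements c_i = a_i b_i a_i^{-1} b_i^{-1} for i = 1,…,g generate a free subgroup of rank g, i.e., the homomorphism F_g → F_{2g} sending the i-th generator to [a_i, b_i] is injective. -/
/-!
Replacing each letter `c_i^{±1}` of a reduced word by `a_i b_i a_i⁻¹ b_i⁻¹`, resp.
`b_i a_i b_i⁻¹ a_i⁻¹`, yields a reduced word: each block is reduced, and since every block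
starts with a positive and ends with a negative letter, a cancellation at a junction can only
occur between the blocks of `c_i` and `c_i⁻¹`, which are not adjacent in a reduced word.
So the image of a nontrivial element is a nonempty reduced word.
-/

open scoped commutatorElement

theorem List.IsChain.flatMap {α β : Type*} {R : α → α → Prop} {S : β → β → Prop}
    {f : β → List α} {l : List β} (h : l.IsChain S) (hne : ∀ b, f b ≠ [])
    (hf : ∀ b, (f b).IsChain R)
    (hS : ∀ b c, S b c → ∀ x ∈ (f b).getLast?, ∀ y ∈ (f c).head?, R x y) :
    (l.flatMap f).IsChain R := by
  rw [List.flatMap_def, List.isChain_flatten (by simpa using fun b _ => (hne b).symm)]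
  exact ⟨by simpa using fun b _ => hf b, (List.isChain_map f).2 (h.imp hS)⟩

namespace FreeGroup

variable {α β : Type*}

theorem lift_mk_eq_mk_flatMap {f : α → FreeGroup β} {w : α × Bool → List (β × Bool)}
    (hw : ∀ x, lift f (mk [x]) = mk (w x)) (L : List (α × Bool)) :
    lift f (mk L) = mk (L.flatMap w) := by
  induction L with
  | nil => rfl
  | cons x L ih =>
    rw [List.flatMap_cons, ← mul_mk, ← hw, ← ih, ← _root_.map_mul, mul_mk, List.singleton_append]

theorem lift_injective_of_isReduced_flatMap {f : α → FreeGroup β}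
    {w : α × Bool → List (β × Bool)} (hw : ∀ x, lift f (mk [x]) = mk (w x))
    (hne : ∀ x, w x ≠ []) (hred : ∀ L, IsReduced L → IsReduced (L.flatMap w)) :
    Function.Injective (lift f) := by
  classical
  refine (injective_iff_map_eq_one _).2 fun x hx => ?_
  have hword : x.toWord.flatMap w = [] := by
    rw [← (hred _ isReduced_toWord).reduce_eq, ← toWord_mk, ← lift_mk_eq_mk_flatMap hw,
      mk_toWord, hx, toWord_one]
  rw [← toWord_eq_nil_iff, List.eq_nil_iff_forall_not_mem]
  exact fun a ha => hne a (List.flatMap_eq_nil_iff.1 hword a ha)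

def commutatorWord : α × Bool → List ((α × Bool) × Bool)
  | (i, true) => [((i, false), true), ((i, true), true), ((i, false), false), ((i, true), false)]
  | (i, false) => [((i, true), true), ((i, false), true), ((i, true), false), ((i, false), false)]

theorem commutatorWord_ne_nil (x : α × Bool) : commutatorWord x ≠ [] := by
  obtain ⟨i, _ | _⟩ := x <;> simp [commutatorWord]

theorem lift_commutator_mk_singleton (x : α × Bool) :
    lift (fun i => ⁅of (i, false), of (i, true)⁆) (mk [x]) = mk (commutatorWord x) := by
  have hof (a : α) : mk [(a, false)] = (of a)⁻¹ := by rw [of, inv_mk]; rfl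
  obtain ⟨i, _ | _⟩ := x
  · rw [hof, _root_.map_inv, lift_apply_of, commutatorElement_inv]
    simp [commutatorElement_def, of, inv_mk, invRev, mul_mk, commutatorWord]
  · simp [commutatorElement_def, of, inv_mk, invRev, mul_mk, commutatorWord]

theorem isReduced_flatMap_commutatorWord {L : List (α × Bool)} (h : IsReduced L) :
    IsReduced (L.flatMap commutatorWord) := by
  refine h.flatMap commutatorWord_ne_nil ?_ ?_
  · rintro ⟨i, _ | _⟩ <;> simp [commutatorWord]
  · rintro ⟨i, _ | _⟩ ⟨j, _ | _⟩ <;> simp [commutatorWord]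

theorem lift_commutator_injective :
    Function.Injective (lift fun i : α => ⁅of (i, false), of (i, true)⁆) :=
  lift_injective_of_isReduced_flatMap lift_commutator_mk_singleton commutatorWord_ne_nil
    fun _ => isReduced_flatMap_commutatorWord

end FreeGroup

/-- In the free group `F_{2g} = ⟨a_1, b_1, …, a_g, b_g⟩` (here generated by
`(i, false) ↦ a_i` and `(i, true) ↦ b_i`), the commutators
`c_i = a_i b_i a_i⁻¹ b_i⁻¹` generate a free subgroup of rank `g`: the
homomorphism `F_g → F_{2g}` sending the `i`-th generator to `[a_i, b_i]`
is injective. -/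
theorem commutators_freely_generate (g : ℕ) :
    Function.Injective
      (FreeGroup.lift
        (fun i : Fin g => ⁅FreeGroup.of (i, false), FreeGroup.of (i, true)⁆) :
        FreeGroup (Fin g) →* FreeGroup (Fin g × Bool)) :=
  FreeGroup.lift_commutator_injective
end
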